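/- arXiv:1405.1062 — 4 statements merged into one kernel-verified Lean document; each statement's English description precedes it below -/
import Mathlib

section
/- If a bipartite density operator ρ on C^d ⊗ C^d equals the homocorrelation operator H(M) of some completely positive trace-preserving map M, then ρ has positive partial transpose (ρ^{T_A} ≥ 0). Conversely, if ρ^{T_A} ≥ 0 and Tr_B[d·ρ] = I, then ρ = H(M) for some CPTP map M. -/
open Matrix Kronecker BigOperators
open scoped ComplexOrder

/-- Homocorrelation operator `H(M) = (1/d) ∑ i j, |i⟩⟨j| ⊗ M(|j⟩⟨i|)`. -/
noncomputable def homocorr (d : ℕ)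
    (M : Matrix (Fin d) (Fin d) ℂ →ₗ[ℂ] Matrix (Fin d) (Fin d) ℂ) :
    Matrix (Fin d × Fin d) (Fin d × Fin d) ℂ :=
  (d : ℂ)⁻¹ • ∑ i : Fin d, ∑ j : Fin d,
    (Matrix.single i j (1 : ℂ)) ⊗ₖ M (Matrix.single j i (1 : ℂ))

/-- Choi operator `J(M) = (1/d) ∑ i j, |i⟩⟨j| ⊗ M(|i⟩⟨j|)`. -/
noncomputable def choiOp (d : ℕ)
    (M : Matrix (Fin d) (Fin d) ℂ →ₗ[ℂ] Matrix (Fin d) (Fin d) ℂ) :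
    Matrix (Fin d × Fin d) (Fin d × Fin d) ℂ :=
  (d : ℂ)⁻¹ • ∑ i : Fin d, ∑ j : Fin d,
    (Matrix.single i j (1 : ℂ)) ⊗ₖ M (Matrix.single i j (1 : ℂ))

/-- Partial transpose on the first tensor factor. -/
noncomputable def ptransposeA {d : ℕ} (ρ : Matrix (Fin d × Fin d) (Fin d × Fin d) ℂ) :
    Matrix (Fin d × Fin d) (Fin d × Fin d) ℂ :=
  fun p q => ρ (q.1, p.2) (p.1, q.2)

/-- Partial trace over the second tensor factor. -/
noncomputable def ptraceB {d : ℕ} (ρ : Matrix (Fin d × Fin d) (Fin d × Fin d) ℂ) :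
    Matrix (Fin d) (Fin d) ℂ :=
  fun i j => ∑ m : Fin d, ρ (i, m) (j, m)

/-- A superoperator is CPTP iff its Choi operator is positive semidefinite and
has partial trace over `B` equal to `(1/d) I` (trace preservation). -/
noncomputable def IsCPTP (d : ℕ)
    (M : Matrix (Fin d) (Fin d) ℂ →ₗ[ℂ] Matrix (Fin d) (Fin d) ℂ) : Prop :=
  (choiOp d M).PosSemidef ∧ ptraceB (choiOp d M) = (d : ℂ)⁻¹ • (1 : Matrix (Fin d) (Fin d) ℂ)

lemma homocorr_apply (d : ℕ) (M : Matrix (Fin d) (Fin d) ℂ →ₗ[ℂ] Matrix (Fin d) (Fin d) ℂ)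
    (p q : Fin d × Fin d) :
    homocorr d M p q = (d : ℂ)⁻¹ * M (Matrix.single q.1 p.1 1) p.2 q.2 := by
  simp only [homocorr, Matrix.smul_apply, Matrix.sum_apply, Matrix.kroneckerMap_apply,
    Matrix.single, Matrix.of_apply, ite_mul, one_mul, zero_mul, smul_eq_mul]
  rw [Finset.sum_eq_single p.1]
  · rw [Finset.sum_eq_single q.1] <;> simp +contextual
  · simp +contextual
  · simp

lemma choiOp_apply (d : ℕ) (M : Matrix (Fin d) (Fin d) ℂ →ₗ[ℂ] Matrix (Fin d) (Fin d) ℂ)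
    (p q : Fin d × Fin d) :
    choiOp d M p q = (d : ℂ)⁻¹ * M (Matrix.single p.1 q.1 1) p.2 q.2 := by
  simp only [choiOp, Matrix.smul_apply, Matrix.sum_apply, Matrix.kroneckerMap_apply,
    Matrix.single, Matrix.of_apply, ite_mul, one_mul, zero_mul, smul_eq_mul]
  rw [Finset.sum_eq_single p.1]
  · rw [Finset.sum_eq_single q.1] <;> simp +contextual
  · simp +contextual
  · simp

lemma ptransposeA_homocorr (d : ℕ)
    (M : Matrix (Fin d) (Fin d) ℂ →ₗ[ℂ] Matrix (Fin d) (Fin d) ℂ) :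
    ptransposeA (homocorr d M) = choiOp d M := by
  funext p q
  simp [ptransposeA, homocorr_apply, choiOp_apply]

lemma ptransposeA_invol {d : ℕ} (ρ : Matrix (Fin d × Fin d) (Fin d × Fin d) ℂ) :
    ptransposeA (ptransposeA ρ) = ρ := rfl

/-- The map whose (rescaled) Choi operator is `σ`. -/
noncomputable def mapOfChoi (d : ℕ) (σ : Matrix (Fin d × Fin d) (Fin d × Fin d) ℂ) :
    Matrix (Fin d) (Fin d) ℂ →ₗ[ℂ] Matrix (Fin d) (Fin d) ℂ where
  toFun X := Matrix.of fun a b => (d : ℂ) * ∑ i : Fin d, ∑ j : Fin d, X i j * σ (i, a) (j, b)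
  map_add' X Y := by
    funext a b
    simp [Matrix.add_apply, add_mul, Finset.sum_add_distrib, mul_add]
  map_smul' c X := by
    funext a b
    simp [Finset.mul_sum, mul_assoc, mul_left_comm (c : ℂ)]

lemma mapOfChoi_std (d : ℕ) (σ : Matrix (Fin d × Fin d) (Fin d × Fin d) ℂ)
    (i j a b : Fin d) :
    mapOfChoi d σ (Matrix.single i j 1) a b = (d : ℂ) * σ (i, a) (j, b) := by
  show (d : ℂ) * ∑ i' : Fin d, ∑ j' : Fin d, Matrix.single i j (1 : ℂ) i' j' * σ (i', a) (j', b) = _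
  simp only [mapOfChoi, LinearMap.coe_mk, AddHom.coe_mk, Matrix.of_apply,
    Matrix.single, ite_mul, one_mul, zero_mul]
  congr 1
  rw [Finset.sum_eq_single i]
  · rw [Finset.sum_eq_single j]
    · simp
    · intro b1 _ h; simp [Ne.symm h]
    · simp
  · intro b1 _ h; simp [Ne.symm h]
  · simp

theorem stmt2 (d : ℕ) (ρ : Matrix (Fin d × Fin d) (Fin d × Fin d) ℂ)
    (hρ : ρ.PosSemidef) (htr : ρ.trace = 1) :
    ((∃ M : Matrix (Fin d) (Fin d) ℂ →ₗ[ℂ] Matrix (Fin d) (Fin d) ℂ,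
        IsCPTP d M ∧ ρ = homocorr d M) → (ptransposeA ρ).PosSemidef) ∧
    (((ptransposeA ρ).PosSemidef ∧ ptraceB ((d : ℂ) • ρ) = 1) →
      ∃ M : Matrix (Fin d) (Fin d) ℂ →ₗ[ℂ] Matrix (Fin d) (Fin d) ℂ,
        IsCPTP d M ∧ ρ = homocorr d M) := by
  constructor
  · rintro ⟨M, ⟨hpsd, _⟩, rfl⟩
    rw [ptransposeA_homocorr]
    exact hpsd
  · rintro ⟨hpsd, htrB⟩
    set σ := ptransposeA ρ with hσ
    refine ⟨mapOfChoi d σ, ⟨?_, ?_⟩, ?_⟩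
    case _ =>
      -- choiOp = σ
      have hchoi : choiOp d (mapOfChoi d σ) = σ := by
        funext p q
        rw [choiOp_apply, mapOfChoi_std]
        rcases Nat.eq_zero_or_pos d with h0 | hpos
        · exact absurd p.1.2 (by omega)
        · field_simp
      rw [hchoi]; exact hpsd
    case _ =>
      have hchoi : choiOp d (mapOfChoi d σ) = σ := by
        funext p q
        rw [choiOp_apply, mapOfChoi_std]
        rcases Nat.eq_zero_or_pos d with h0 | hpos
        · exact absurd p.1.2 (by omega)
        · field_simp
      rw [hchoi]
      funext i j
      have hd : (d : ℂ) ≠ 0 := Nat.cast_ne_zero.mpr i.pos.ne'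
      have h1 : ptraceB ((d : ℂ) • ρ) i j = (1 : Matrix (Fin d) (Fin d) ℂ) i j := by
        rw [htrB]
      simp only [ptraceB, Matrix.smul_apply, smul_eq_mul, ← Finset.mul_sum] at h1
      have : ptraceB σ i j = ∑ m : Fin d, ρ (j, m) (i, m) := rfl
      rw [this]
      have h2 : ∑ m : Fin d, ρ (j, m) (i, m) = (d : ℂ)⁻¹ * (1 : Matrix (Fin d) (Fin d) ℂ) j i := by
        have := h1
        -- h1 is for (i,j); we need (j,i)
        have h1' : (d : ℂ) * ∑ m : Fin d, ρ (j, m) (i, m) = (1 : Matrix (Fin d) (Fin d) ℂ) j i := by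
          have := congrFun (congrFun htrB j) i
          simpa only [ptraceB, Matrix.smul_apply, smul_eq_mul, ← Finset.mul_sum] using this
        field_simp at h1' ⊢
        linear_combination h1'
      rw [h2]
      simp [Matrix.one_apply, Matrix.smul_apply, eq_comm]
    case _ =>
      have hH : homocorr d (mapOfChoi d σ) = ptransposeA σ := by
        funext p q
        rw [homocorr_apply, mapOfChoi_std]
        rcases Nat.eq_zero_or_pos d with h0 | hpos
        · exact absurd p.1.2 (by omega)
        · simp only [ptransposeA]
          field_simp
      rw [hH, hσ, ptransposeA_invol]
end

section
/- The Brauer operator ρ(η, β) = (1−η−β) I/d² + η V/d + β V^{T_A}/d on C^d ⊗ C^d is positive semidefinite if and only if the three inequalities hold: 1 ≥ (d+1)η + β, 1 ≥ −(d−1)η − (d²−1)β, and 1 ≥ −(d−1)η + β. -/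
open Matrix Kronecker BigOperators
open scoped ComplexOrder

/-- The swap operator `V = ∑ i j, |ij⟩⟨ji|` on `C^d ⊗ C^d`. -/
noncomputable def swapOp (d : ℕ) : Matrix (Fin d × Fin d) (Fin d × Fin d) ℂ :=
  fun p q => if p.1 = q.2 ∧ p.2 = q.1 then 1 else 0

/-- The Brauer operator `ρ(η,β) = (1−η−β) I/d² + η V/d + β V^{T_A}/d`. -/
noncomputable def brauer (d : ℕ) (η β : ℝ) : Matrix (Fin d × Fin d) (Fin d × Fin d) ℂ :=
  ((1 - η - β) / (d : ℝ)^2) • (1 : Matrix (Fin d × Fin d) (Fin d × Fin d) ℂ)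
    + (η / (d : ℝ)) • swapOp d + (β / (d : ℝ)) • ptransposeA (swapOp d)

/-!
With `Q = V^{T_A}` one has `V² = 1`, `Q² = d Q` and `V Q = Q V = Q`, so `(1 - V)/2`, `Q/d` and
`(1 + V)/2 - Q/d` are orthogonal projections summing to `1`, and `ρ(η,β)` acts on their ranges by
the scalars `(1 - (d+1)η - β)/d²`, `(1 + (d-1)η + (d²-1)β)/d²` and `(1 + (d-1)η - β)/d²`.
Hence `ρ(η,β)` is a combination of these projections, and for `d ≥ 2` none of them vanishes, so it
is PSD exactly when the three scalars are nonnegative.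
-/

namespace Matrix

variable {n 𝕜 : Type*} [Fintype n] [RCLike 𝕜]

lemma IsHermitian.posSemidef_of_mul_self {P : Matrix n n 𝕜} (hP : P.IsHermitian)
    (hPP : P * P = P) : P.PosSemidef := by
  simpa only [hP.eq, hPP] using posSemidef_conjTranspose_mul_self P

/-- If `c • P = Pᴴ ρ P` were PSD with `c < 0`, then `-(c • P)` would be PSD too, so its trace
would vanish. -/
lemma PosSemidef.nonneg_of_mul_eq_smul {ρ P : Matrix n n 𝕜} {c : ℝ} (hρ : ρ.PosSemidef)
    (hP : P.IsHermitian) (hPP : P * P = P) (hP0 : P ≠ 0) (hPρ : P * ρ = c • P) : 0 ≤ c := by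
  by_contra! hc
  have hpos : (c • P).PosSemidef := by
    have : Pᴴ * ρ * P = c • P := by rw [hP.eq, hPρ, smul_mul_assoc, hPP]
    exact this ▸ hρ.conjTranspose_mul_mul_same P
  have hneg : (-(c • P)).PosSemidef := by
    rw [← neg_smul]
    exact (hP.posSemidef_of_mul_self hPP).smul (neg_nonneg.2 hc.le)
  have htr : (c • P).trace = 0 :=
    le_antisymm (by simpa [trace_neg] using hneg.trace_nonneg) hpos.trace_nonneg
  rw [hpos.trace_eq_zero_iff, smul_eq_zero] at htr
  exact htr.elim hc.ne hP0

end Matrix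

section Brauer

variable (d : ℕ)

lemma ptransposeA_swapOp_apply (p q : Fin d × Fin d) :
    ptransposeA (swapOp d) p q = if p.1 = p.2 ∧ q.1 = q.2 then 1 else 0 := by
  simp only [ptransposeA, swapOp]
  exact if_congr ⟨fun h => ⟨h.2.symm, h.1⟩, fun h => ⟨h.2, h.1.symm⟩⟩ rfl rfl

lemma isHermitian_swapOp : (swapOp d).IsHermitian := by
  ext p q
  simp only [swapOp, conjTranspose_apply, apply_ite star, star_one, star_zero]
  exact if_congr ⟨fun h => ⟨h.2.symm, h.1.symm⟩, fun h => ⟨h.2.symm, h.1.symm⟩⟩ rfl rfl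

lemma isHermitian_ptransposeA_swapOp : (ptransposeA (swapOp d)).IsHermitian := by
  ext p q
  simp only [ptransposeA_swapOp_apply, conjTranspose_apply, apply_ite star, star_one, star_zero]
  exact if_congr and_comm rfl rfl

lemma swapOp_mul_self : swapOp d * swapOp d = 1 := by
  ext p q
  simp only [mul_apply, swapOp, one_apply, Fintype.sum_prod_type]
  simp [ite_and, Prod.ext_iff, eq_comm]

lemma ptransposeA_swapOp_mul_self :
    ptransposeA (swapOp d) * ptransposeA (swapOp d) = (d : ℂ) • ptransposeA (swapOp d) := by
  ext p q
  simp only [mul_apply, ptransposeA_swapOp_apply, Matrix.smul_apply, smul_eq_mul,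
    Fintype.sum_prod_type]
  by_cases h1 : p.1 = p.2 <;> by_cases h2 : q.1 = q.2 <;> simp [h1, h2]

lemma swapOp_mul_ptransposeA_swapOp :
    swapOp d * ptransposeA (swapOp d) = ptransposeA (swapOp d) := by
  ext p q
  simp only [mul_apply, swapOp, ptransposeA_swapOp_apply, Fintype.sum_prod_type]
  by_cases h1 : p.1 = p.2 <;> by_cases h2 : q.1 = q.2 <;> simp [h1, h2, ite_and, eq_comm]

lemma ptransposeA_swapOp_mul_swapOp :
    ptransposeA (swapOp d) * swapOp d = ptransposeA (swapOp d) := by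
  ext p q
  simp only [mul_apply, swapOp, ptransposeA_swapOp_apply, Fintype.sum_prod_type]
  by_cases h1 : p.1 = p.2 <;> by_cases h2 : q.1 = q.2 <;> simp [h1, h2, ite_and, eq_comm]

noncomputable def antisymProj : Matrix (Fin d × Fin d) (Fin d × Fin d) ℂ :=
  (2⁻¹ : ℝ) • (1 - swapOp d)

/-- `|Φ⁺⟩⟨Φ⁺|`, as `V^{T_A} = d |Φ⁺⟩⟨Φ⁺|`. -/
noncomputable def maxEntProj : Matrix (Fin d × Fin d) (Fin d × Fin d) ℂ :=
  ((d : ℝ)⁻¹) • ptransposeA (swapOp d)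

noncomputable def symComplProj : Matrix (Fin d × Fin d) (Fin d × Fin d) ℂ :=
  (2⁻¹ : ℝ) • (1 + swapOp d) - maxEntProj d

lemma antisymProj_add_maxEntProj_add_symComplProj :
    antisymProj d + maxEntProj d + symComplProj d = 1 := by
  simp only [antisymProj, symComplProj]
  module

lemma isHermitian_antisymProj : (antisymProj d).IsHermitian :=
  (isHermitian_one.sub (isHermitian_swapOp d)).smul (.all _)

lemma isHermitian_maxEntProj : (maxEntProj d).IsHermitian :=
  (isHermitian_ptransposeA_swapOp d).smul (.all _)

lemma isHermitian_symComplProj : (symComplProj d).IsHermitian :=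
  ((isHermitian_one.add (isHermitian_swapOp d)).smul (.all _)).sub (isHermitian_maxEntProj d)

lemma antisymProj_mul_self : antisymProj d * antisymProj d = antisymProj d := by
  simp only [antisymProj, smul_mul_smul_comm, sub_mul, mul_sub, one_mul, mul_one, swapOp_mul_self]
  match_scalars <;> norm_num

lemma posSemidef_antisymProj : (antisymProj d).PosSemidef :=
  (isHermitian_antisymProj d).posSemidef_of_mul_self (antisymProj_mul_self d)

variable {d}

lemma maxEntProj_mul_self (hd : d ≠ 0) : maxEntProj d * maxEntProj d = maxEntProj d := by
  simp only [maxEntProj, smul_mul_smul_comm, ptransposeA_swapOp_mul_self]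
  match_scalars
  field_simp

lemma symComplProj_mul_self (hd : d ≠ 0) : symComplProj d * symComplProj d = symComplProj d := by
  simp only [symComplProj, maxEntProj, sub_mul, mul_sub, smul_mul_smul_comm, add_mul, mul_add,
    one_mul, mul_one, swapOp_mul_self, ptransposeA_swapOp_mul_self, swapOp_mul_ptransposeA_swapOp,
    ptransposeA_swapOp_mul_swapOp]
  match_scalars <;> field_simp <;> ring

lemma antisymProj_mul_brauer (η β : ℝ) :
    antisymProj d * brauer d η β =
      ((1 - ((d : ℝ) + 1) * η - β) / (d : ℝ) ^ 2) • antisymProj d := by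
  simp only [antisymProj, brauer, sub_mul, mul_add, smul_mul_smul_comm, one_mul, mul_one,
    swapOp_mul_self, swapOp_mul_ptransposeA_swapOp, smul_smul]
  match_scalars <;> field_simp <;> ring

lemma maxEntProj_mul_brauer (hd : d ≠ 0) (η β : ℝ) :
    maxEntProj d * brauer d η β =
      ((1 + ((d : ℝ) - 1) * η + ((d : ℝ) ^ 2 - 1) * β) / (d : ℝ) ^ 2) • maxEntProj d := by
  simp only [maxEntProj, brauer, mul_add, smul_mul_smul_comm, mul_one,
    ptransposeA_swapOp_mul_swapOp, ptransposeA_swapOp_mul_self, smul_smul]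
  match_scalars
  field_simp
  ring

lemma symComplProj_mul_brauer (hd : d ≠ 0) (η β : ℝ) :
    symComplProj d * brauer d η β =
      ((1 + ((d : ℝ) - 1) * η - β) / (d : ℝ) ^ 2) • symComplProj d := by
  simp only [symComplProj, maxEntProj, brauer, sub_mul, add_mul, mul_add, smul_mul_smul_comm,
    one_mul, mul_one, swapOp_mul_self, swapOp_mul_ptransposeA_swapOp, ptransposeA_swapOp_mul_swapOp,
    ptransposeA_swapOp_mul_self]
  match_scalars <;> field_simp <;> ring

lemma brauer_eq_sum_smul_proj (hd : d ≠ 0) (η β : ℝ) :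
    brauer d η β = ((1 - ((d : ℝ) + 1) * η - β) / (d : ℝ) ^ 2) • antisymProj d
      + ((1 + ((d : ℝ) - 1) * η + ((d : ℝ) ^ 2 - 1) * β) / (d : ℝ) ^ 2) • maxEntProj d
      + ((1 + ((d : ℝ) - 1) * η - β) / (d : ℝ) ^ 2) • symComplProj d := by
  rw [← antisymProj_mul_brauer, ← maxEntProj_mul_brauer hd, ← symComplProj_mul_brauer hd,
    ← add_mul, ← add_mul, antisymProj_add_maxEntProj_add_symComplProj, one_mul]

lemma antisymProj_ne_zero (hd : 2 ≤ d) : antisymProj d ≠ 0 := by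
  intro h
  have := congr_fun₂ h (⟨0, by omega⟩, ⟨1, by omega⟩) (⟨0, by omega⟩, ⟨1, by omega⟩)
  simp [antisymProj, swapOp] at this

lemma maxEntProj_ne_zero (hd : d ≠ 0) : maxEntProj d ≠ 0 := by
  intro h
  have := congr_fun₂ h (⟨0, by omega⟩, ⟨0, by omega⟩) (⟨0, by omega⟩, ⟨0, by omega⟩)
  simp [maxEntProj, ptransposeA_swapOp_apply, hd] at this

lemma symComplProj_ne_zero (hd : 2 ≤ d) : symComplProj d ≠ 0 := by
  intro h
  have := congr_fun₂ h (⟨0, by omega⟩, ⟨1, by omega⟩) (⟨0, by omega⟩, ⟨1, by omega⟩)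
  simp [symComplProj, maxEntProj, swapOp, ptransposeA_swapOp_apply] at this

lemma posSemidef_maxEntProj (hd : d ≠ 0) : (maxEntProj d).PosSemidef :=
  (isHermitian_maxEntProj d).posSemidef_of_mul_self (maxEntProj_mul_self hd)

lemma posSemidef_symComplProj (hd : d ≠ 0) : (symComplProj d).PosSemidef :=
  (isHermitian_symComplProj d).posSemidef_of_mul_self (symComplProj_mul_self hd)

end Brauer

theorem stmt6 (d : ℕ) (hd : 2 ≤ d) (η β : ℝ) :
    (brauer d η β).PosSemidef ↔
      ((d : ℝ) + 1) * η + β ≤ 1 ∧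
      -((d : ℝ) - 1) * η - ((d : ℝ)^2 - 1) * β ≤ 1 ∧
      -((d : ℝ) - 1) * η + β ≤ 1 := by
  have hd0 : d ≠ 0 := by omega
  have hsq : (0 : ℝ) < (d : ℝ) ^ 2 := by positivity
  constructor
  · intro hρ
    have hA := hρ.nonneg_of_mul_eq_smul (isHermitian_antisymProj d) (antisymProj_mul_self d)
      (antisymProj_ne_zero hd) (antisymProj_mul_brauer η β)
    have hB := hρ.nonneg_of_mul_eq_smul (isHermitian_maxEntProj d) (maxEntProj_mul_self hd0)
      (maxEntProj_ne_zero hd0) (maxEntProj_mul_brauer hd0 η β)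
    have hC := hρ.nonneg_of_mul_eq_smul (isHermitian_symComplProj d) (symComplProj_mul_self hd0)
      (symComplProj_ne_zero hd) (symComplProj_mul_brauer hd0 η β)
    rw [le_div_iff₀ hsq, zero_mul] at hA hB hC
    exact ⟨by linarith, by linarith, by linarith⟩
  · rintro ⟨hA, hB, hC⟩
    rw [brauer_eq_sum_smul_proj hd0]
    refine (((posSemidef_antisymProj d).smul ?_).add ((posSemidef_maxEntProj hd0).smul ?_)).add
      ((posSemidef_symComplProj hd0).smul ?_) <;>
    exact div_nonneg (by linarith) hsq.le
end

section
/- The Brauer operator ρ(η, β) = (1−η−β) I/d² + η V/d + β V^{T_A}/d is local-positive (⟨ψ⊗φ| ρ(η,β) |ψ⊗φ⟩ ≥ 0 for all unit vectors ψ, φ ∈ C^d) if and only if −1/(d−1) ≤ η + β ≤ 1, −(d−1)η + β ≤ 1, and η − (d−1)β ≤ 1. -/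
open Matrix Kronecker BigOperators
open scoped ComplexOrder

/-- Local-positivity (block-positivity) of a bipartite operator:
`⟨ψ⊗φ| M |ψ⊗φ⟩ ≥ 0` for all vectors `ψ, φ`. -/
noncomputable def LocalPositive {d : ℕ} (M : Matrix (Fin d × Fin d) (Fin d × Fin d) ℂ) : Prop :=
  ∀ ψ φ : Fin d → ℂ,
    0 ≤ star (fun p : Fin d × Fin d => ψ p.1 * φ p.2) ⬝ᵥ
          M *ᵥ (fun p : Fin d × Fin d => ψ p.1 * φ p.2)

/-!
On a product vector `ψ ⊗ φ` the Brauer operator has expectation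
`((1 - η - β) P + d η s + d β t) / d²` with `P = ‖ψ‖² ‖φ‖²`, `s = |⟨ψ, φ⟩|²` and
`t = |∑ ψᵢ φᵢ|²`, the last term coming from `V^{T_A} = d |Φ⁺⟩⟨Φ⁺|`. By Cauchy–Schwarz `(s, t)`
ranges in the square `[0, P]²`, and once `d ≥ 2` all four corners are attained. An affine function
is nonnegative on a square iff it is nonnegative at the corners, and the four corner conditions are
the four inequalities of the theorem.
-/

lemma affine_nonneg_of_corners {a b c P s t : ℝ} (h₀₀ : 0 ≤ a) (h₁₀ : 0 ≤ a + b)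
    (h₀₁ : 0 ≤ a + c) (h₁₁ : 0 ≤ a + b + c) (hs : 0 ≤ s) (hsP : s ≤ P) (ht : 0 ≤ t)
    (htP : t ≤ P) : 0 ≤ a * P + b * s + c * t := by
  rcases le_total 0 b with hb | hb <;> rcases le_total 0 c with hc | hc <;>
    nlinarith [mul_le_mul_of_nonneg_left hsP h₀₀, mul_le_mul_of_nonneg_left htP h₀₀]

section ProductVector

variable {R ι κ : Type*}

def prodVec [Mul R] (ψ : ι → R) (φ : κ → R) : ι × κ → R := fun p => ψ p.1 * φ p.2

lemma star_prodVec_dotProduct_prodVec [CommSemiring R] [StarRing R] [Fintype ι] [Fintype κ]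
    (ψ ψ' : ι → R) (φ φ' : κ → R) :
    star (prodVec ψ φ) ⬝ᵥ prodVec ψ' φ' = (star ψ ⬝ᵥ ψ') * (star φ ⬝ᵥ φ') := by
  simp only [dotProduct, prodVec, Pi.star_apply, star_mul', Fintype.sum_prod_type,
    Finset.sum_mul_sum]
  exact Finset.sum_congr rfl fun i _ => Finset.sum_congr rfl fun j _ => by ring

end ProductVector

section Norms

variable {ι : Type*} [Fintype ι]

lemma star_dotProduct_self_eq_norm_sq (ψ : ι → ℂ) :
    star ψ ⬝ᵥ ψ = (‖WithLp.toLp 2 ψ‖ ^ 2 : ℝ) := by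
  rw [dotProduct_comm, ← EuclideanSpace.inner_toLp_toLp, inner_self_eq_norm_sq_to_K]
  norm_cast

lemma star_dotProduct_mul_star_dotProduct (ψ φ : ι → ℂ) :
    (star ψ ⬝ᵥ φ) * (star φ ⬝ᵥ ψ) = (‖star ψ ⬝ᵥ φ‖ ^ 2 : ℝ) := by
  rw [← star_star ψ, star_dotProduct_star, star_star, Complex.star_def, Complex.mul_conj']
  norm_cast

lemma norm_star_dotProduct_le (ψ φ : ι → ℂ) :
    ‖star ψ ⬝ᵥ φ‖ ≤ ‖WithLp.toLp 2 ψ‖ * ‖WithLp.toLp 2 φ‖ := by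
  rw [dotProduct_comm, ← EuclideanSpace.inner_toLp_toLp]
  exact norm_inner_le_norm _ _

lemma norm_dotProduct_le (ψ φ : ι → ℂ) :
    ‖ψ ⬝ᵥ φ‖ ≤ ‖WithLp.toLp 2 ψ‖ * ‖WithLp.toLp 2 φ‖ := by
  simpa [EuclideanSpace.norm_eq] using norm_star_dotProduct_le (star ψ) φ

end Norms

section TwoModes

variable {ι : Type*} [Fintype ι] [DecidableEq ι] {i j : ι}

lemma single_add_single_dotProduct (hij : i ≠ j) (x y z w : ℂ) :
    (Pi.single i x + Pi.single j y : ι → ℂ) ⬝ᵥ (Pi.single i z + Pi.single j w) =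
      x * z + y * w := by
  simp [dotProduct_add, hij, hij.symm]

lemma star_single_add_single_dotProduct (hij : i ≠ j) (x y z w : ℂ) :
    star (Pi.single i x + Pi.single j y : ι → ℂ) ⬝ᵥ (Pi.single i z + Pi.single j w) =
      star x * z + star y * w := by
  simp [dotProduct_add, hij, hij.symm]

lemma norm_toLp_single_add_single_sq (hij : i ≠ j) (x y : ℂ) :
    ‖WithLp.toLp 2 (Pi.single i x + Pi.single j y : ι → ℂ)‖ ^ 2 = ‖x‖ ^ 2 + ‖y‖ ^ 2 := by
  apply Complex.ofReal_injective
  rw [← star_dotProduct_self_eq_norm_sq, star_single_add_single_dotProduct hij,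
    Complex.star_def, Complex.conj_mul', Complex.conj_mul']
  norm_cast

end TwoModes

section Corners

variable {ι : Type*} [Fintype ι] {a b c : ℝ}

lemma forall_nonneg_of_corners (h₀₀ : 0 ≤ a) (h₁₀ : 0 ≤ a + b) (h₀₁ : 0 ≤ a + c)
    (h₁₁ : 0 ≤ a + b + c) (ψ φ : ι → ℂ) :
    0 ≤ a * (‖WithLp.toLp 2 ψ‖ ^ 2 * ‖WithLp.toLp 2 φ‖ ^ 2) + b * ‖star ψ ⬝ᵥ φ‖ ^ 2
      + c * ‖ψ ⬝ᵥ φ‖ ^ 2 := by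
  refine affine_nonneg_of_corners h₀₀ h₁₀ h₀₁ h₁₁ (by positivity) ?_ (by positivity) ?_
  · rw [← mul_pow]
    exact pow_le_pow_left₀ (norm_nonneg _) (norm_star_dotProduct_le ψ φ) 2
  · rw [← mul_pow]
    exact pow_le_pow_left₀ (norm_nonneg _) (norm_dotProduct_le ψ φ) 2

lemma corners_of_forall_nonneg [Nontrivial ι]
    (h : ∀ ψ φ : ι → ℂ, 0 ≤ a * (‖WithLp.toLp 2 ψ‖ ^ 2 * ‖WithLp.toLp 2 φ‖ ^ 2)
      + b * ‖star ψ ⬝ᵥ φ‖ ^ 2 + c * ‖ψ ⬝ᵥ φ‖ ^ 2) :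
    0 ≤ a ∧ 0 ≤ a + b ∧ 0 ≤ a + c ∧ 0 ≤ a + b + c := by
  classical
  obtain ⟨i, j, hij⟩ := exists_pair_ne ι
  have h' (x y z w : ℂ) : 0 ≤ a * ((‖x‖ ^ 2 + ‖y‖ ^ 2) * (‖z‖ ^ 2 + ‖w‖ ^ 2))
      + b * ‖star x * z + star y * w‖ ^ 2 + c * ‖x * z + y * w‖ ^ 2 := by
    have := h (Pi.single i x + Pi.single j y) (Pi.single i z + Pi.single j w)
    rwa [norm_toLp_single_add_single_sq hij, norm_toLp_single_add_single_sq hij,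
      star_single_add_single_dotProduct hij, single_add_single_dotProduct hij] at this
  -- `(s, t) = (0, 0), (P, P), (P, 0), (0, P)` at `eᵢ ⊗ eⱼ`, `eᵢ ⊗ eᵢ`, `u ⊗ u`, `u ⊗ ū`,
  -- where `u = eᵢ + I eⱼ`
  have h₀₀ := h' 1 0 0 1
  have h₁₁ := h' 1 0 1 0
  have h₁₀ := h' 1 Complex.I 1 Complex.I
  have h₀₁ := h' 1 Complex.I 1 (-Complex.I)
  norm_num at h₀₀ h₁₁ h₁₀ h₀₁
  exact ⟨h₀₀, by linarith, by linarith, h₁₁⟩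

theorem forall_nonneg_iff_corners [Nontrivial ι] :
    (∀ ψ φ : ι → ℂ, 0 ≤ a * (‖WithLp.toLp 2 ψ‖ ^ 2 * ‖WithLp.toLp 2 φ‖ ^ 2)
      + b * ‖star ψ ⬝ᵥ φ‖ ^ 2 + c * ‖ψ ⬝ᵥ φ‖ ^ 2) ↔
      0 ≤ a ∧ 0 ≤ a + b ∧ 0 ≤ a + c ∧ 0 ≤ a + b + c :=
  ⟨corners_of_forall_nonneg, fun ⟨h₀₀, h₁₀, h₀₁, h₁₁⟩ => forall_nonneg_of_corners h₀₀ h₁₀ h₀₁ h₁₁⟩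

end Corners

lemma swapOp_mulVec_prodVec {d : ℕ} (ψ φ : Fin d → ℂ) :
    swapOp d *ᵥ prodVec ψ φ = prodVec φ ψ := by
  ext p
  simp [mulVec, dotProduct, swapOp, prodVec, Fintype.sum_prod_type, ite_and, mul_comm]

/-- `√d |Φ⁺⟩`, so that `V^{T_A} = d |Φ⁺⟩⟨Φ⁺|` reads `vecMulVec (phiPlus d) (phiPlus d)`. -/
def phiPlus (d : ℕ) : Fin d × Fin d → ℂ := fun p => if p.1 = p.2 then 1 else 0

lemma ptransposeA_swapOp (d : ℕ) :
    ptransposeA (swapOp d) = vecMulVec (phiPlus d) (phiPlus d) := by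
  ext p q
  simp only [ptransposeA, swapOp, vecMulVec_apply, phiPlus, mul_ite, mul_one, mul_zero]
  grind

lemma phiPlus_dotProduct_prodVec {d : ℕ} (ψ φ : Fin d → ℂ) :
    phiPlus d ⬝ᵥ prodVec ψ φ = ψ ⬝ᵥ φ := by
  simp [dotProduct, prodVec, phiPlus, Fintype.sum_prod_type]

lemma star_prodVec_dotProduct_phiPlus {d : ℕ} (ψ φ : Fin d → ℂ) :
    star (prodVec ψ φ) ⬝ᵥ phiPlus d = star (ψ ⬝ᵥ φ) := by
  simp [dotProduct, prodVec, phiPlus, Fintype.sum_prod_type, star_sum]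

lemma brauer_expectation {d : ℕ} (η β : ℝ) (ψ φ : Fin d → ℂ) :
    star (prodVec ψ φ) ⬝ᵥ brauer d η β *ᵥ prodVec ψ φ =
      ((1 - η - β) / d ^ 2 * (‖WithLp.toLp 2 ψ‖ ^ 2 * ‖WithLp.toLp 2 φ‖ ^ 2)
        + η / d * ‖star ψ ⬝ᵥ φ‖ ^ 2 + β / d * ‖ψ ⬝ᵥ φ‖ ^ 2 : ℝ) := by
  simp only [brauer, add_mulVec, smul_mulVec, one_mulVec, swapOp_mulVec_prodVec,
    ptransposeA_swapOp, vecMulVec_mulVec, dotProduct_add, dotProduct_smul, op_smul_eq_smul,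
    star_prodVec_dotProduct_prodVec, phiPlus_dotProduct_prodVec, star_prodVec_dotProduct_phiPlus]
  rw [star_dotProduct_self_eq_norm_sq, star_dotProduct_self_eq_norm_sq,
    star_dotProduct_mul_star_dotProduct, Complex.star_def, smul_eq_mul, Complex.mul_conj']
  simp only [Complex.real_smul]
  push_cast
  ring

lemma localPositive_brauer_iff {d : ℕ} (hd : 0 < d) (η β : ℝ) :
    LocalPositive (brauer d η β) ↔ ∀ ψ φ : Fin d → ℂ,
      0 ≤ (1 - η - β) * (‖WithLp.toLp 2 ψ‖ ^ 2 * ‖WithLp.toLp 2 φ‖ ^ 2)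
        + d * η * ‖star ψ ⬝ᵥ φ‖ ^ 2 + d * β * ‖ψ ⬝ᵥ φ‖ ^ 2 := by
  refine forall₂_congr fun ψ φ => ?_
  change 0 ≤ star (prodVec ψ φ) ⬝ᵥ _ *ᵥ prodVec ψ φ ↔ _
  have hd' : (0 : ℝ) < d := by exact_mod_cast hd
  rw [brauer_expectation, Complex.zero_le_real, ← mul_nonneg_iff_of_pos_right (pow_pos hd' 2)]
  field_simp

theorem stmt7 (d : ℕ) (hd : 2 ≤ d) (η β : ℝ) :
    LocalPositive (brauer d η β) ↔
      (-1 / ((d : ℝ) - 1) ≤ η + β ∧ η + β ≤ 1) ∧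
      -((d : ℝ) - 1) * η + β ≤ 1 ∧
      η - ((d : ℝ) - 1) * β ≤ 1 := by
  have : Nontrivial (Fin d) := Fin.nontrivial_iff_two_le.mpr hd
  have hd' : (1 : ℝ) < d := by exact_mod_cast hd
  rw [localPositive_brauer_iff (by omega), forall_nonneg_iff_corners, div_le_iff₀ (by linarith)]
  constructor
  · rintro ⟨h₀₀, h₁₀, h₀₁, h₁₁⟩
    exact ⟨⟨by linarith, by linarith⟩, by linarith, by linarith⟩
  · rintro ⟨⟨h₁₁, h₀₀⟩, h₁₀, h₀₁⟩
    exact ⟨by linarith, by linarith, by linarith, by linarith⟩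
end

section
/- The Werner operator ρ(η) = (1−η) I/d² + η V/d is local-positive if and only if −1/(d−1) ≤ η ≤ 1. -/
/-!
On a product vector `ψ ⊗ φ` the form of `a • 1 + b • V` is `a ‖ψ‖²‖φ‖² + b |⟨ψ, φ⟩|²`, an affine
function of `|⟨ψ, φ⟩|²`, which by Cauchy–Schwarz ranges over `[0, ‖ψ‖²‖φ‖²]`; both ends are
attained, by orthogonal unit vectors (this needs `d ≥ 2`) and by `ψ = φ`. Hence `a • 1 + b • V` is
local-positive iff `a ≥ 0` and `a + b ≥ 0`, which for the Werner operator read `η ≤ 1` and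
`1 + η (d - 1) ≥ 0`.
-/

open Matrix Kronecker BigOperators
open scoped ComplexOrder

/-- The Werner operator `ρ(η) = (1−η) I/d² + η V/d`. -/
noncomputable def werner (d : ℕ) (η : ℝ) : Matrix (Fin d × Fin d) (Fin d × Fin d) ℂ :=
  ((1 - η) / (d : ℝ)^2) • (1 : Matrix (Fin d × Fin d) (Fin d × Fin d) ℂ)
    + (η / (d : ℝ)) • swapOp d

open scoped InnerProductSpace
open WithLp

variable {R m n : Type*}

def tensorVec [Mul R] (ψ : m → R) (φ : n → R) : m × n → R := fun p => ψ p.1 * φ p.2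

theorem star_tensorVec_dotProduct_tensorVec [Fintype m] [Fintype n] [CommSemiring R] [StarRing R]
    (ψ ψ' : m → R) (φ φ' : n → R) :
    star (tensorVec ψ φ) ⬝ᵥ tensorVec ψ' φ' = (star ψ ⬝ᵥ ψ') * (star φ ⬝ᵥ φ') := by
  simp only [dotProduct, tensorVec, Pi.star_apply, star_mul', Fintype.sum_prod_type,
    Finset.sum_mul_sum]
  exact Finset.sum_congr rfl fun _ _ => Finset.sum_congr rfl fun _ _ => mul_mul_mul_comm _ _ _ _

theorem swapOp_mulVec_tensorVec {d : ℕ} (ψ φ : Fin d → ℂ) :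
    swapOp d *ᵥ tensorVec ψ φ = tensorVec φ ψ := by
  ext ⟨i, j⟩
  simp [mulVec, dotProduct, swapOp, tensorVec, Fintype.sum_prod_type, ite_and, mul_comm]

theorem star_tensorVec_dotProduct_smul_one_add_smul_swapOp {d : ℕ} (a b : ℝ)
    (x y : EuclideanSpace ℂ (Fin d)) :
    star (tensorVec x.ofLp y.ofLp) ⬝ᵥ (a • 1 + b • swapOp d) *ᵥ tensorVec x.ofLp y.ofLp =
      ((a * (‖x‖ ^ 2 * ‖y‖ ^ 2) + b * ‖⟪x, y⟫_ℂ‖ ^ 2 : ℝ) : ℂ) := by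
  have hdot (u v : EuclideanSpace ℂ (Fin d)) : star u.ofLp ⬝ᵥ v.ofLp = ⟪u, v⟫_ℂ :=
    dotProduct_comm _ _
  rw [add_mulVec, smul_mulVec, smul_mulVec, one_mulVec, swapOp_mulVec_tensorVec, dotProduct_add,
    dotProduct_smul, dotProduct_smul, star_tensorVec_dotProduct_tensorVec,
    star_tensorVec_dotProduct_tensorVec, hdot, hdot, hdot, hdot, inner_self_eq_norm_sq_to_K,
    inner_self_eq_norm_sq_to_K, ← inner_conj_symm y x, RCLike.mul_conj]
  simp [Complex.real_smul]

theorem localPositive_smul_one_add_smul_swapOp_iff {d : ℕ} (hd : 2 ≤ d) (a b : ℝ) :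
    LocalPositive (a • (1 : Matrix (Fin d × Fin d) (Fin d × Fin d) ℂ) + b • swapOp d) ↔
      0 ≤ a ∧ 0 ≤ a + b := by
  have hform : LocalPositive (a • (1 : Matrix (Fin d × Fin d) (Fin d × Fin d) ℂ) + b • swapOp d)
      ↔ ∀ x y : EuclideanSpace ℂ (Fin d), 0 ≤ a * (‖x‖ ^ 2 * ‖y‖ ^ 2) + b * ‖⟪x, y⟫_ℂ‖ ^ 2 := by
    change (∀ ψ φ : Fin d → ℂ, 0 ≤ star (tensorVec ψ φ) ⬝ᵥ _ *ᵥ tensorVec ψ φ) ↔ _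
    refine ⟨fun h x y => ?_, fun h ψ φ => ?_⟩
    · simpa only [star_tensorVec_dotProduct_smul_one_add_smul_swapOp, Complex.zero_le_real]
        using h x.ofLp y.ofLp
    · rw [← ofLp_toLp 2 ψ, ← ofLp_toLp 2 φ, star_tensorVec_dotProduct_smul_one_add_smul_swapOp]
      exact Complex.zero_le_real.2 (h _ _)
  rw [hform]
  constructor
  · intro h
    obtain ⟨e, he⟩ : ∃ e : Fin d → EuclideanSpace ℂ (Fin d), Orthonormal ℂ e :=
      ⟨_, (EuclideanSpace.basisFun (Fin d) ℂ).orthonormal⟩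
    let i : Fin d := ⟨0, by omega⟩
    let j : Fin d := ⟨1, by omega⟩
    have h_parallel := h (e i) (e i)
    have h_orthogonal := h (e i) (e j)
    rw [inner_self_eq_norm_sq_to_K, he.1] at h_parallel
    rw [he.2 (show i ≠ j by simp [i, j, Fin.ext_iff])] at h_orthogonal
    norm_num [he.1] at h_parallel h_orthogonal
    constructor <;> linarith
  · rintro ⟨ha, hab⟩ x y
    have hcs : ‖⟪x, y⟫_ℂ‖ ^ 2 ≤ ‖x‖ ^ 2 * ‖y‖ ^ 2 := by
      rw [← mul_pow]; exact pow_le_pow_left₀ (norm_nonneg _) (norm_inner_le_norm x y) 2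
    -- `a N + b T = a (N - T) + (a + b) T`
    nlinarith [mul_nonneg ha (sub_nonneg.2 hcs), mul_nonneg hab (sq_nonneg ‖⟪x, y⟫_ℂ‖)]

theorem stmt8 (d : ℕ) (hd : 2 ≤ d) (η : ℝ) :
    LocalPositive (werner d η) ↔ -1 / ((d : ℝ) - 1) ≤ η ∧ η ≤ 1 := by
  have hd1 : (1 : ℝ) < d := by exact_mod_cast hd
  have hcoeff : (1 - η) / (d : ℝ) ^ 2 + η / d = (1 + η * (d - 1)) / (d : ℝ) ^ 2 := by
    field_simp; ring
  rw [werner, localPositive_smul_one_add_smul_swapOp_iff hd, hcoeff, div_le_iff₀ (by linarith),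
    le_div_iff₀ (by positivity), le_div_iff₀ (by positivity), zero_mul]
  constructor <;> rintro ⟨h₁, h₂⟩ <;> constructor <;> linarith
end
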